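/- arXiv:1811.11068 — 4 statements merged into one kernel-verified Lean document; each statement's English description precedes it below -/
import Mathlib

section
/- Let p be a prime, d ≤ p, and let P : F_p^n → F_p be a polynomial of degree at most d−1. Then there exist polynomials P_0, ..., P_{d−1} : F_p^n → F_p such that for all x, y ∈ F_p^n, P(y) = ∑_{i=0}^{d−1} P_i(x + i·y). -/
open Polynomial Finset

private lemma coeff_prod_of_natDegree_le' {R : Type*} [CommRing R] {ι : Type*}
    (s : Finset ι) (f : ι → R[X]) (n : ι → ℕ)
    (h : ∀ i ∈ s, (f i).natDegree ≤ n i) :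
    (∏ i ∈ s, f i).coeff (∑ i ∈ s, n i) = ∏ i ∈ s, (f i).coeff (n i) := by
  classical
  induction s using Finset.induction_on with
  | empty => simp
  | @insert a t ha ih =>
    rw [Finset.prod_insert ha, Finset.sum_insert ha, Finset.prod_insert ha,
      Polynomial.coeff_mul_add_eq_of_natDegree_le (h a (mem_insert_self _ _))
        (le_trans (natDegree_prod_le _ _)
          (Finset.sum_le_sum fun i hi' => h i (mem_insert_of_mem hi'))),
      ih fun i hi' => h i (mem_insert_of_mem hi')]

/-- A polynomial of degree at most `d-1` in `n` variables over `F_p` (with `d ≤ p`)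
can be written as `P(y) = ∑_{i=0}^{d-1} P_i(x + i·y)` for all `x, y`. -/
theorem poly_decomposition_along_lines (p n d : ℕ) (hp : p.Prime) (hd0 : 0 < d) (hd : d ≤ p)
    (P : MvPolynomial (Fin n) (ZMod p)) (hP : P.totalDegree ≤ d - 1) :
    ∃ Q : Fin d → MvPolynomial (Fin n) (ZMod p),
      ∀ x y : Fin n → ZMod p,
        MvPolynomial.eval y P = ∑ i : Fin d, MvPolynomial.eval (x + (i : ℕ) • y) (Q i) := by
  haveI : Fact p.Prime := ⟨hp⟩
  classical
  -- interpolation nodes 0, 1, ..., d-1 in ZMod p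
  set v : Fin d → ZMod p := fun i => ((i : ℕ) : ZMod p) with hvdef
  have hinj : Set.InjOn v (Finset.univ : Finset (Fin d)) := by
    intro i _ j _ hij
    have h2 : ((i : ℕ) : ZMod p).val = ((j : ℕ) : ZMod p).val := by
      simpa [v] using congrArg ZMod.val hij
    rw [ZMod.val_cast_of_lt (lt_of_lt_of_le i.2 hd),
      ZMod.val_cast_of_lt (lt_of_lt_of_le j.2 hd)] at h2
    exact Fin.ext h2
  -- coefficient-extraction weights from the Lagrange basis
  set c : ℕ → Fin d → ZMod p :=
    fun m i => (Lagrange.basis Finset.univ v i).coeff m with hcdef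
  -- interpolation: extract the m-th coefficient of a polynomial of degree < d
  have interp : ∀ g : Polynomial (ZMod p), g.natDegree < d →
      ∀ m : ℕ, g.coeff m = ∑ i : Fin d, c m i * g.eval (v i) := by
    intro g hg m
    have hdeg : g.degree < ((Finset.univ : Finset (Fin d)).card : WithBot ℕ) := by
      rw [Finset.card_univ, Fintype.card_fin]
      exact lt_of_le_of_lt Polynomial.degree_le_natDegree (by exact_mod_cast hg)
    conv_lhs => rw [Lagrange.eq_interpolate hinj hdeg]
    rw [Lagrange.interpolate_apply, Polynomial.finset_sum_coeff]
    exact Finset.sum_congr rfl fun i _ => by rw [Polynomial.coeff_C_mul, mul_comm]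
  refine ⟨fun i => ∑ m ∈ Finset.range d,
      MvPolynomial.C (c m i) * MvPolynomial.homogeneousComponent m P, fun x y => ?_⟩
  -- substitution x + t y
  set s : Fin n → Polynomial (ZMod p) :=
    fun j => Polynomial.C (x j) + Polynomial.X * Polynomial.C (y j) with hsdef
  have hs1 : ∀ j, (s j).natDegree ≤ 1 := by
    intro j; simp only [hsdef]; compute_degree
  -- evaluation of the substituted polynomial
  have evalA : ∀ (q : MvPolynomial (Fin n) (ZMod p)) (t : ZMod p),
      Polynomial.eval t (MvPolynomial.aeval s q)
        = MvPolynomial.eval (fun j => x j + t * y j) q := by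
    intro q t
    induction q using MvPolynomial.induction_on with
    | C a => simp [s]
    | add q r hq hr => simp [hq, hr]
    | mul_X q j hq =>
      rw [map_mul, MvPolynomial.aeval_X, Polynomial.eval_mul, hq, map_mul,
        MvPolynomial.eval_X]
      congr 1
      simp [s]
      ring
  -- degree bound for the substituted polynomial
  have degA : ∀ q : MvPolynomial (Fin n) (ZMod p),
      (MvPolynomial.aeval s q : Polynomial (ZMod p)).natDegree ≤ q.totalDegree := by
    intro q
    rw [MvPolynomial.aeval_def, MvPolynomial.eval₂_eq]
    apply Polynomial.natDegree_sum_le_of_forall_le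
    intro α hα
    refine le_trans Polynomial.natDegree_mul_le ?_
    have h0 : (algebraMap (ZMod p) (Polynomial (ZMod p)) (q.coeff α)).natDegree = 0 := by
      rw [Polynomial.algebraMap_eq]; exact Polynomial.natDegree_C _
    rw [h0, zero_add]
    refine le_trans (Polynomial.natDegree_prod_le _ _) ?_
    refine le_trans (Finset.sum_le_sum fun j _ =>
      le_trans (Polynomial.natDegree_pow_le)
        (by simpa using Nat.mul_le_mul_left (α j) (hs1 j))) ?_
    simpa [Finsupp.sum] using MvPolynomial.le_totalDegree hα
  -- the m-th coefficient of the substituted homogeneous component is its value at y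
  have coeffA : ∀ m : ℕ,
      (MvPolynomial.aeval s (MvPolynomial.homogeneousComponent m P)).coeff m
        = MvPolynomial.eval y (MvPolynomial.homogeneousComponent m P) := by
    intro m
    set R := MvPolynomial.homogeneousComponent m P with hR
    have hhom : ∀ α ∈ R.support, ∑ j ∈ α.support, α j = m := by
      intro α hα
      have := (MvPolynomial.homogeneousComponent_isHomogeneous m P)
        (MvPolynomial.mem_support_iff.mp hα)
      simpa [Finsupp.weight, Finsupp.sum, Finsupp.linearCombination] using this
    rw [MvPolynomial.aeval_def, MvPolynomial.eval₂_eq, MvPolynomial.eval_eq,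
      Polynomial.finset_sum_coeff]
    refine Finset.sum_congr rfl fun α hα => ?_
    rw [Polynomial.algebraMap_eq, Polynomial.coeff_C_mul]
    congr 1
    rw [← hhom α hα,
      coeff_prod_of_natDegree_le' _ _ (fun j => α j)
        (fun j _ => le_trans Polynomial.natDegree_pow_le
          (by simpa using Nat.mul_le_mul_left (α j) (hs1 j)))]
    refine Finset.prod_congr rfl fun j _ => ?_
    have hc1 : (s j).coeff 1 = y j := by
      simp [hsdef, Polynomial.coeff_add, Polynomial.coeff_C]
    have := Polynomial.coeff_pow_of_natDegree_le (hs1 j) (m := α j)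
    rw [mul_one] at this
    rw [this, hc1]
  -- P is the sum of its homogeneous components in degrees < d
  have hPd : ∑ m ∈ Finset.range d, MvPolynomial.homogeneousComponent m P = P := by
    conv_rhs => rw [← MvPolynomial.sum_homogeneousComponent P]
    symm
    apply Finset.sum_subset
    · intro m hm
      simp only [Finset.mem_range] at hm ⊢
      omega
    · intro m _ hm
      apply MvPolynomial.homogeneousComponent_eq_zero
      simp only [Finset.mem_range, not_lt] at hm
      omega
  calc MvPolynomial.eval y P
      = ∑ m ∈ Finset.range d,
          MvPolynomial.eval y (MvPolynomial.homogeneousComponent m P) := by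
        conv_lhs => rw [← hPd]
        rw [map_sum]
    _ = ∑ m ∈ Finset.range d,
          (MvPolynomial.aeval s (MvPolynomial.homogeneousComponent m P)).coeff m := by
        exact Finset.sum_congr rfl fun m _ => (coeffA m).symm
    _ = ∑ m ∈ Finset.range d, ∑ i : Fin d,
          c m i * (MvPolynomial.aeval s (MvPolynomial.homogeneousComponent m P)).eval (v i) := by
        refine Finset.sum_congr rfl fun m hm => ?_
        refine interp _ ?_ m
        refine lt_of_le_of_lt (le_trans (degA _)
          (MvPolynomial.homogeneousComponent_isHomogeneous m P).totalDegree_le) ?_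
        exact Finset.mem_range.mp hm
    _ = ∑ i : Fin d, ∑ m ∈ Finset.range d,
          c m i * MvPolynomial.eval (x + (i : ℕ) • y) (MvPolynomial.homogeneousComponent m P) := by
        rw [Finset.sum_comm]
        refine Finset.sum_congr rfl fun i _ => Finset.sum_congr rfl fun m _ => ?_
        have hfun : (fun j => x j + v i * y j) = x + (i : ℕ) • y := by
          funext j
          simp [v, nsmul_eq_mul]
        rw [evalA, hfun]
    _ = ∑ i : Fin d, MvPolynomial.eval (x + (i : ℕ) • y)
          (∑ m ∈ Finset.range d, MvPolynomial.C (c m i)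
            * MvPolynomial.homogeneousComponent m P) := by
        refine Finset.sum_congr rfl fun i _ => ?_
        rw [map_sum]
        exact Finset.sum_congr rfl fun m _ => by rw [map_mul, MvPolynomial.eval_C]
end

section
/- Let u_1,...,u_k and v_1,...,v_k be vectors in a real inner product space with ∑_{i=1}^k ‖u_i‖² = ∑_{i=1}^k ‖v_i‖² = 1, and let ε = (1/2) ∑_{i=1}^k ‖u_i − v_i‖². Then ∑_{i=1}^k | ‖u_i‖² − ‖v_i‖² | ≤ 2√(2ε). -/
theorem sum_abs_sq_norm_diff_le {E : Type*} [NormedAddCommGroup E] [InnerProductSpace ℝ E]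
    (k : ℕ) (u v : Fin k → E)
    (hu : ∑ i, ‖u i‖ ^ 2 = 1) (hv : ∑ i, ‖v i‖ ^ 2 = 1)
    (ε : ℝ) (hε : ε = (1 / 2 : ℝ) * ∑ i, ‖u i - v i‖ ^ 2) :
    ∑ i, |‖u i‖ ^ 2 - ‖v i‖ ^ 2| ≤ 2 * Real.sqrt (2 * ε) := by
  have h1 : ∑ i, |‖u i‖ ^ 2 - ‖v i‖ ^ 2| ≤ ∑ i, ‖u i - v i‖ * (‖u i‖ + ‖v i‖) := by
    refine Finset.sum_le_sum fun i _ => ?_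
    have : ‖u i‖ ^ 2 - ‖v i‖ ^ 2 = (‖u i‖ - ‖v i‖) * (‖u i‖ + ‖v i‖) := by ring
    rw [this, abs_mul, abs_of_nonneg (by positivity : (0:ℝ) ≤ ‖u i‖ + ‖v i‖)]
    exact mul_le_mul_of_nonneg_right (abs_norm_sub_norm_le _ _) (by positivity)
  have h2 := Real.sum_mul_le_sqrt_mul_sqrt Finset.univ (fun i => ‖u i - v i‖)
      (fun i => ‖u i‖ + ‖v i‖)
  have h3 : ∑ i, (‖u i‖ + ‖v i‖) ^ 2 ≤ 4 := by
    have : ∀ i : Fin k, (‖u i‖ + ‖v i‖) ^ 2 ≤ 2 * ‖u i‖ ^ 2 + 2 * ‖v i‖ ^ 2 := by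
      intro i; nlinarith [sq_nonneg (‖u i‖ - ‖v i‖)]
    calc ∑ i, (‖u i‖ + ‖v i‖) ^ 2 ≤ ∑ i, (2 * ‖u i‖ ^ 2 + 2 * ‖v i‖ ^ 2) :=
          Finset.sum_le_sum fun i _ => this i
      _ = 4 := by rw [Finset.sum_add_distrib, ← Finset.mul_sum, ← Finset.mul_sum, hu, hv]; ring
  have h4 : Real.sqrt (∑ i, (‖u i‖ + ‖v i‖) ^ 2) ≤ 2 := by
    rw [show (2:ℝ) = Real.sqrt 4 by rw [show (4:ℝ) = 2^2 by norm_num, Real.sqrt_sq (by norm_num)]]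
    exact Real.sqrt_le_sqrt h3
  have h5 : (∑ i, ‖u i - v i‖ ^ 2) = 2 * ε := by rw [hε]; ring
  calc ∑ i, |‖u i‖ ^ 2 - ‖v i‖ ^ 2| ≤ ∑ i, ‖u i - v i‖ * (‖u i‖ + ‖v i‖) := h1
    _ ≤ Real.sqrt (∑ i, ‖u i - v i‖ ^ 2) * Real.sqrt (∑ i, (‖u i‖ + ‖v i‖) ^ 2) := h2
    _ ≤ Real.sqrt (2 * ε) * 2 := by
        rw [← h5]; exact mul_le_mul_of_nonneg_left h4 (Real.sqrt_nonneg _)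
    _ = 2 * Real.sqrt (2 * ε) := mul_comm _ _
end

section
/- Let X, Y be finite sets with probability distributions, T : X × Y → {−1, 1}, and let A : X → Obs, B : Y → Obs be functions into the ±1-valued observables (self-adjoint unitaries) on C^N such that every A(x) commutes with every B(y). Then ‖E_{x,y} T(x,y) A(x) B(y)‖_op ≤ ( E_{x,x',y,y'} T(x,y) T(x',y) T(x,y') T(x',y') )^{1/4}, where expectations over x,x' (resp. y,y') are independent copies of the given distribution on X (resp. Y). -/
/-!
Put `C y = ∑ₓ pX x T(x,y) A x`, so that the bias operator is `∑_y pY y C_y B_y`. The operator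
Cauchy–Schwarz inequality bounds its norm by `‖∑_y pY y C_y²‖^{1/2} ‖∑_y pY y B_y²‖^{1/2}`, and
the second factor is `‖Id‖^{1/2} ≤ 1`. Expanding, `∑_y pY y C_y² = ∑_{x,x'} pX x pX x' c(x,x') A x A x'`
with `c(x,x') = E_y T(x,y) T(x',y)`. Since the `A x` are contractions, its norm is at most
`E_{x,x'} |c(x,x')| ≤ (E_{x,x'} c(x,x')²)^{1/2}`, and `E_{x,x'} c(x,x')²` is the fourth moment.
-/

open ContinuousLinearMap

section OperatorCauchySchwarz

variable {𝕜 E F G ι : Type*} [RCLike 𝕜]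
  [NormedAddCommGroup E] [InnerProductSpace 𝕜 E] [CompleteSpace E]
  [NormedAddCommGroup F] [InnerProductSpace 𝕜 F] [CompleteSpace F]
  [NormedAddCommGroup G] [InnerProductSpace 𝕜 G] [CompleteSpace G] [Fintype ι]

theorem ContinuousLinearMap.sum_norm_sq_apply_le (Q : ι → E →L[𝕜] F) (v : E) :
    ∑ i, ‖Q i v‖ ^ 2 ≤ ‖∑ i, adjoint (Q i) ∘L Q i‖ * ‖v‖ ^ 2 :=
  calc ∑ i, ‖Q i v‖ ^ 2 = RCLike.re (inner 𝕜 v ((∑ i, adjoint (Q i) ∘L Q i) v)) := by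
        simp only [apply_norm_sq_eq_inner_adjoint_right, sum_apply, inner_sum, map_sum]
    _ ≤ ‖v‖ * ‖(∑ i, adjoint (Q i) ∘L Q i) v‖ := re_inner_le_norm _ _
    _ ≤ ‖v‖ * (‖∑ i, adjoint (Q i) ∘L Q i‖ * ‖v‖) := by gcongr; exact le_opNorm _ _
    _ = ‖∑ i, adjoint (Q i) ∘L Q i‖ * ‖v‖ ^ 2 := by ring

theorem ContinuousLinearMap.norm_sum_comp_le (P : ι → F →L[𝕜] G) (Q : ι → E →L[𝕜] F) :
    ‖∑ i, P i ∘L Q i‖ ≤ √‖∑ i, P i ∘L adjoint (P i)‖ * √‖∑ i, adjoint (Q i) ∘L Q i‖ := by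
  set S := ∑ i, P i ∘L Q i
  set RP := ‖∑ i, P i ∘L adjoint (P i)‖
  set RQ := ‖∑ i, adjoint (Q i) ∘L Q i‖
  refine opNorm_le_bound _ (by positivity) fun v => ?_
  have hP : ∑ i, ‖adjoint (P i) (S v)‖ ^ 2 ≤ RP * ‖S v‖ ^ 2 := by
    simpa only [adjoint_adjoint] using sum_norm_sq_apply_le (fun i => adjoint (P i)) (S v)
  have key : ‖S v‖ ^ 2 ≤ ‖S v‖ * (√RP * √RQ * ‖v‖) :=
    calc ‖S v‖ ^ 2 = ∑ i, RCLike.re (inner 𝕜 (Q i v) (adjoint (P i) (S v))) := by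
          rw [← inner_self_eq_norm_sq (𝕜 := 𝕜)]
          nth_rewrite 1 [show S v = ∑ i, P i (Q i v) by simp [S]]
          simp only [sum_inner, map_sum, ← adjoint_inner_right]
      _ ≤ ∑ i, ‖Q i v‖ * ‖adjoint (P i) (S v)‖ :=
          Finset.sum_le_sum fun i _ => re_inner_le_norm _ _
      _ ≤ √(∑ i, ‖Q i v‖ ^ 2) * √(∑ i, ‖adjoint (P i) (S v)‖ ^ 2) :=
          Real.sum_mul_le_sqrt_mul_sqrt _ _ _
      _ ≤ √(RQ * ‖v‖ ^ 2) * √(RP * ‖S v‖ ^ 2) := by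
          gcongr
          exact sum_norm_sq_apply_le Q v
      _ = ‖S v‖ * (√RP * √RQ * ‖v‖) := by
          rw [Real.sqrt_mul (norm_nonneg _), Real.sqrt_mul (norm_nonneg _),
            Real.sqrt_sq (norm_nonneg _), Real.sqrt_sq (norm_nonneg _)]
          ring
  nlinarith [norm_nonneg (S v), show 0 ≤ √RP * √RQ * ‖v‖ by positivity]

theorem ContinuousLinearMap.norm_sum_smul_comp_le (w : ι → ℝ) (hw : ∀ i, 0 ≤ w i)
    (P : ι → F →L[𝕜] G) (Q : ι → E →L[𝕜] F) :
    ‖∑ i, (w i : 𝕜) • (P i ∘L Q i)‖ ≤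
      √‖∑ i, (w i : 𝕜) • (P i ∘L adjoint (P i))‖ *
        √‖∑ i, (w i : 𝕜) • (adjoint (Q i) ∘L Q i)‖ := by
  have hsq : ∀ i, ((√(w i) : ℝ) : 𝕜) * ((√(w i) : ℝ) : 𝕜) = w i := by
    intro i; rw [← RCLike.ofReal_mul, Real.mul_self_sqrt (hw i)]
  simpa only [map_smulₛₗ, RCLike.conj_ofReal, smul_comp, comp_smul, smul_smul, hsq] using
    norm_sum_comp_le (fun i => ((√(w i) : ℝ) : 𝕜) • P i) (fun i => ((√(w i) : ℝ) : 𝕜) • Q i)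

end OperatorCauchySchwarz

theorem ContinuousLinearMap.norm_le_one_of_adjoint_comp_self_eq_id {𝕜 E F : Type*} [RCLike 𝕜]
    [NormedAddCommGroup E] [InnerProductSpace 𝕜 E] [CompleteSpace E]
    [NormedAddCommGroup F] [InnerProductSpace 𝕜 F] [CompleteSpace F]
    {U : E →L[𝕜] F} (hU : adjoint U ∘L U = ContinuousLinearMap.id 𝕜 E) : ‖U‖ ≤ 1 := by
  have h := norm_adjoint_comp_self U
  rw [hU] at h
  nlinarith [norm_id_le (𝕜 := 𝕜) (E := E), norm_nonneg U]

theorem norm_sum_smul_le_sum_norm_of_norm_le_one {𝕜 V ι : Type*} [NormedField 𝕜]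
    [SeminormedAddCommGroup V] [NormedSpace 𝕜 V] (s : Finset ι) (a : ι → 𝕜) {U : ι → V}
    (hU : ∀ i ∈ s, ‖U i‖ ≤ 1) : ‖∑ i ∈ s, a i • U i‖ ≤ ∑ i ∈ s, ‖a i‖ :=
  (norm_sum_le _ _).trans <| Finset.sum_le_sum fun i hi =>
    (norm_smul_le _ _).trans (mul_le_of_le_one_right (norm_nonneg _) (hU i hi))

theorem Real.sum_mul_abs_le_sqrt_sum_mul_sq {ι : Type*} (s : Finset ι) (w f : ι → ℝ)
    (hw : ∀ i ∈ s, 0 ≤ w i) (hw1 : ∑ i ∈ s, w i = 1) :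
    ∑ i ∈ s, w i * |f i| ≤ √(∑ i ∈ s, w i * f i ^ 2) := by
  refine Real.le_sqrt_of_sq_le ?_
  calc (∑ i ∈ s, w i * |f i|) ^ 2 ≤ (∑ i ∈ s, w i) * ∑ i ∈ s, w i * f i ^ 2 :=
        Finset.sum_sq_le_sum_mul_sum_of_sq_le_mul s hw
          (fun i hi => mul_nonneg (hw i hi) (sq_nonneg _)) fun i _ => le_of_eq (by rw [mul_pow, sq_abs]; ring)
    _ = ∑ i ∈ s, w i * f i ^ 2 := by rw [hw1, one_mul]

namespace XorGame

variable {𝕜 E X Y : Type*} [RCLike 𝕜] [NormedAddCommGroup E] [InnerProductSpace 𝕜 E] [Fintype X]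
  (pX : X → ℝ) (pY : Y → ℝ) (T : X → Y → ℝ) (A : X → E →L[𝕜] E)

noncomputable def columnAverage (y : Y) : E →L[𝕜] E :=
  ∑ x, ((pX x * T x y : ℝ) : 𝕜) • A x

theorem adjoint_columnAverage [CompleteSpace E] (hA : ∀ x, adjoint (A x) = A x) (y : Y) :
    adjoint (columnAverage pX T A y) = columnAverage pX T A y := by
  simp only [columnAverage, map_sum, map_smulₛₗ, RCLike.conj_ofReal, hA]

variable [Fintype Y]

def rowCorrelation (x x' : X) : ℝ :=
  ∑ y, pY y * (T x y * T x' y)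

theorem sum_smul_comp_eq_sum_smul_columnAverage_comp (B : Y → E →L[𝕜] E) :
    ∑ x, ∑ y, ((pX x * pY y * T x y : ℝ) : 𝕜) • (A x ∘L B y) =
      ∑ y, (pY y : 𝕜) • (columnAverage pX T A y ∘L B y) := by
  rw [Finset.sum_comm]
  simp only [columnAverage, finsetSum_comp, smul_comp, Finset.smul_sum, smul_smul]
  refine Finset.sum_congr rfl fun y _ => Finset.sum_congr rfl fun x _ => ?_
  push_cast
  ring_nf

theorem sum_smul_columnAverage_comp_self :
    ∑ y, (pY y : 𝕜) • (columnAverage pX T A y ∘L columnAverage pX T A y) =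
      ∑ p : X × X, ((pX p.1 * pX p.2 * rowCorrelation pY T p.1 p.2 : ℝ) : 𝕜) •
        (A p.1 ∘L A p.2) := by
  simp only [columnAverage, rowCorrelation, finsetSum_comp, comp_finsetSum, smul_comp,
    comp_smul, Finset.smul_sum, smul_smul, Finset.mul_sum,
    RCLike.ofReal_sum, Finset.sum_smul]
  rw [Fintype.sum_prod_type, Finset.sum_comm]
  conv_rhs => rw [Finset.sum_comm]
  refine Finset.sum_congr rfl fun x' _ => ?_
  rw [Finset.sum_comm]
  refine Finset.sum_congr rfl fun x _ => Finset.sum_congr rfl fun y _ => ?_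
  push_cast
  ring_nf

theorem sum_mul_rowCorrelation_sq :
    ∑ p : X × X, pX p.1 * pX p.2 * rowCorrelation pY T p.1 p.2 ^ 2 =
      ∑ x, ∑ x', ∑ y, ∑ y', pX x * pX x' * pY y * pY y' * (T x y * T x' y * T x y' * T x' y') := by
  rw [Fintype.sum_prod_type]
  simp only [rowCorrelation, sq, Finset.sum_mul_sum]
  simp only [Finset.mul_sum]
  refine Finset.sum_congr rfl fun x _ => Finset.sum_congr rfl fun x' _ =>
    Finset.sum_congr rfl fun y _ => Finset.sum_congr rfl fun y' _ => ?_
  ring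

theorem norm_sum_smul_columnAverage_comp_self_le (hpX : ∀ x, 0 ≤ pX x) (hX1 : ∑ x, pX x = 1)
    (hA : ∀ x, ‖A x‖ ≤ 1) :
    ‖∑ y, (pY y : 𝕜) • (columnAverage pX T A y ∘L columnAverage pX T A y)‖ ≤
      √(∑ p : X × X, pX p.1 * pX p.2 * rowCorrelation pY T p.1 p.2 ^ 2) := by
  have hXX : ∑ p : X × X, pX p.1 * pX p.2 = 1 :=
    (Fintype.sum_prod_type' fun a b => pX a * pX b).trans
      (by rw [← Fintype.sum_mul_sum, hX1, one_mul])
  rw [sum_smul_columnAverage_comp_self]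
  calc _ ≤ ∑ p : X × X, ‖((pX p.1 * pX p.2 * rowCorrelation pY T p.1 p.2 : ℝ) : 𝕜)‖ :=
        norm_sum_smul_le_sum_norm_of_norm_le_one _ _ fun p _ =>
          (opNorm_comp_le _ _).trans (mul_le_one₀ (hA _) (norm_nonneg _) (hA _))
    _ = ∑ p : X × X, pX p.1 * pX p.2 * |rowCorrelation pY T p.1 p.2| := by
        simp only [RCLike.norm_ofReal, abs_mul, abs_of_nonneg (hpX _)]
    _ ≤ _ := Real.sum_mul_abs_le_sqrt_sum_mul_sq _ _ _
        (fun p _ => mul_nonneg (hpX _) (hpX _)) hXX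

end XorGame

open XorGame

open ContinuousLinearMap in
theorem xor_bias_le_fourth_moment_general (N : ℕ) {X Y : Type*} [Fintype X] [Fintype Y]
    (pX : X → ℝ) (pY : Y → ℝ)
    (hpX : ∀ x, 0 ≤ pX x) (hpY : ∀ y, 0 ≤ pY y)
    (hX1 : ∑ x, pX x = 1) (hY1 : ∑ y, pY y = 1)
    (T : X → Y → ℝ)
    (A : X → (EuclideanSpace ℂ (Fin N) →L[ℂ] EuclideanSpace ℂ (Fin N)))
    (B : Y → (EuclideanSpace ℂ (Fin N) →L[ℂ] EuclideanSpace ℂ (Fin N)))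
    (hAsa : ∀ x, ContinuousLinearMap.adjoint (A x) = A x)
    (hBsa : ∀ y, ContinuousLinearMap.adjoint (B y) = B y)
    (hA2 : ∀ x, (A x) ∘L (A x) = ContinuousLinearMap.id ℂ (EuclideanSpace ℂ (Fin N)))
    (hB2 : ∀ y, (B y) ∘L (B y) = ContinuousLinearMap.id ℂ (EuclideanSpace ℂ (Fin N))) :
    ‖∑ x, ∑ y, ((pX x * pY y * T x y : ℝ) : ℂ) • ((A x) ∘L (B y))‖ ≤
      (∑ x, ∑ x', ∑ y, ∑ y',
          pX x * pX x' * pY y * pY y' * (T x y * T x' y * T x y' * T x' y'))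
        ^ ((1 : ℝ) / 4) := by
  have hA : ∀ x, ‖A x‖ ≤ 1 := fun x =>
    norm_le_one_of_adjoint_comp_self_eq_id (by rw [hAsa, hA2])
  have hB : ∑ y, (pY y : ℂ) • (adjoint (B y) ∘L B y) = ContinuousLinearMap.id ℂ _ := by
    simp only [hBsa, hB2, ← Finset.sum_smul, ← Complex.ofReal_sum, hY1, Complex.ofReal_one,
      one_smul]
  rw [← sum_mul_rowCorrelation_sq]
  calc _ = ‖∑ y, (pY y : ℂ) • (columnAverage pX T A y ∘L B y)‖ :=
        congrArg norm (sum_smul_comp_eq_sum_smul_columnAverage_comp pX pY T A B)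
    _ ≤ √‖∑ y, (pY y : ℂ) • (columnAverage pX T A y ∘L
          adjoint (columnAverage pX T A y))‖ *
        √‖∑ y, (pY y : ℂ) • (adjoint (B y) ∘L B y)‖ := norm_sum_smul_comp_le pY hpY _ _
    _ ≤ √√(∑ p : X × X, pX p.1 * pX p.2 * rowCorrelation pY T p.1 p.2 ^ 2) * 1 := by
        rw [hB]
        simp only [adjoint_columnAverage _ _ _ hAsa]
        gcongr
        · exact norm_sum_smul_columnAverage_comp_self_le _ _ _ _ hpX hX1 hA
        · exact Real.sqrt_le_one.mpr norm_id_le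
    _ = _ := by
        have h0 : 0 ≤ ∑ p : X × X, pX p.1 * pX p.2 * rowCorrelation pY T p.1 p.2 ^ 2 :=
          Finset.sum_nonneg fun p _ => by have := hpX p.1; have := hpX p.2; positivity
        rw [mul_one, Real.sqrt_eq_rpow, Real.sqrt_eq_rpow, ← Real.rpow_mul h0]
        norm_num

open ContinuousLinearMap in
/-- Cauchy–Schwarz bound for the entangled bias of a two-player XOR game:
`‖E_{x,y} T(x,y) A(x) B(y)‖ ≤ (E_{x,x',y,y'} T(x,y)T(x',y)T(x,y')T(x',y'))^{1/4}`. -/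
theorem xor_bias_le_fourth_moment (N : ℕ) {X Y : Type*} [Fintype X] [Fintype Y]
    (pX : X → ℝ) (pY : Y → ℝ)
    (hpX : ∀ x, 0 ≤ pX x) (hpY : ∀ y, 0 ≤ pY y)
    (hX1 : ∑ x, pX x = 1) (hY1 : ∑ y, pY y = 1)
    (T : X → Y → ℝ) (hT : ∀ x y, T x y = 1 ∨ T x y = -1)
    (A : X → (EuclideanSpace ℂ (Fin N) →L[ℂ] EuclideanSpace ℂ (Fin N)))
    (B : Y → (EuclideanSpace ℂ (Fin N) →L[ℂ] EuclideanSpace ℂ (Fin N)))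
    (hAsa : ∀ x, ContinuousLinearMap.adjoint (A x) = A x)
    (hBsa : ∀ y, ContinuousLinearMap.adjoint (B y) = B y)
    (hA2 : ∀ x, (A x) ∘L (A x) = ContinuousLinearMap.id ℂ (EuclideanSpace ℂ (Fin N)))
    (hB2 : ∀ y, (B y) ∘L (B y) = ContinuousLinearMap.id ℂ (EuclideanSpace ℂ (Fin N)))
    (hcomm : ∀ x y, (A x) ∘L (B y) = (B y) ∘L (A x)) :
    ‖∑ x, ∑ y, ((pX x * pY y * T x y : ℝ) : ℂ) • ((A x) ∘L (B y))‖ ≤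
      (∑ x, ∑ x', ∑ y, ∑ y',
          pX x * pX x' * pY y * pY y' * (T x y * T x' y * T x y' * T x' y'))
        ^ ((1 : ℝ) / 4) :=
  xor_bias_le_fourth_moment_general N pX pY hpX hpY hX1 hY1 T A B hAsa hBsa hA2 hB2
end

section
/- Let r be uniform on [0,1] and for a real number x ≥ 0 define [x]_r = ⌊x⌋ + 1 if the fractional part of x exceeds r, and ⌊x⌋ otherwise. Then E_r [x]_r = x, and for any reals x, y ≥ 0, E_r | [x]_r − [y]_r | ≥ |x − y| with equality E_r | [x]_r − [y]_r | = |x − y| whenever ⌊x⌋ = ⌊y⌋; in general E_r([x]_r − [y]_r) = x − y. -/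
/-- Randomized rounding with threshold `r`: round `x` up if its fractional part
exceeds `r`, down otherwise. -/
noncomputable def roundR (x r : ℝ) : ℝ := if r < Int.fract x then (⌊x⌋ : ℝ) + 1 else (⌊x⌋ : ℝ)

private noncomputable def stepF (c r : ℝ) : ℝ := if r < c then 1 else 0

private lemma stepF_anti (c : ℝ) : Antitone (stepF c) := by
  intro a b hab
  unfold stepF
  split <;> split <;> simp_all <;> linarith

private lemma stepF_intble (c : ℝ) :
    IntervalIntegrable (stepF c) MeasureTheory.volume 0 1 :=
  (stepF_anti c).intervalIntegrable

private lemma stepF_integral (c : ℝ) (h0 : 0 ≤ c) (h1 : c ≤ 1) :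
    (∫ r in (0:ℝ)..1, stepF c r) = c := by
  have heq : stepF c = Set.indicator (Set.Iio c) (fun _ => (1:ℝ)) := by
    funext r
    simp [stepF, Set.indicator, Set.mem_Iio]
  rw [heq, intervalIntegral.integral_of_le (by norm_num : (0:ℝ) ≤ 1),
    MeasureTheory.setIntegral_indicator measurableSet_Iio]
  have hset : Set.Ioc (0:ℝ) 1 ∩ Set.Iio c = Set.Ioo 0 c := by
    ext r
    simp only [Set.mem_inter_iff, Set.mem_Ioc, Set.mem_Iio, Set.mem_Ioo]
    constructor
    · rintro ⟨⟨h1, _⟩, h2⟩; exact ⟨h1, h2⟩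
    · rintro ⟨ha, hb⟩; exact ⟨⟨ha, le_trans hb.le h1⟩, hb⟩
  rw [hset]
  simp [Real.volume_Ioo, h0]

private lemma roundR_eq (x r : ℝ) : roundR x r = (⌊x⌋ : ℝ) + stepF (Int.fract x) r := by
  unfold roundR stepF
  split <;> simp

private lemma roundR_intble (x : ℝ) :
    IntervalIntegrable (roundR x) MeasureTheory.volume 0 1 := by
  have : roundR x = fun r => (⌊x⌋ : ℝ) + stepF (Int.fract x) r := by
    funext r; exact roundR_eq x r
  rw [this]
  exact intervalIntegrable_const.add (stepF_intble _)

private lemma roundR_integral (x : ℝ) : (∫ r in (0:ℝ)..1, roundR x r) = x := by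
  have : (∫ r in (0:ℝ)..1, roundR x r)
      = ∫ r in (0:ℝ)..1, ((⌊x⌋ : ℝ) + stepF (Int.fract x) r) := by
    apply intervalIntegral.integral_congr
    intro r _; exact roundR_eq x r
  rw [this, intervalIntegral.integral_add intervalIntegrable_const (stepF_intble _),
    intervalIntegral.integral_const,
    stepF_integral _ (Int.fract_nonneg x) (Int.fract_lt_one x).le]
  have := Int.floor_add_fract x
  simp only [smul_eq_mul, sub_zero, one_mul]
  linarith

private lemma roundR_sub_integral (x y : ℝ) :
    (∫ r in (0:ℝ)..1, (roundR x r - roundR y r)) = x - y := by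
  rw [intervalIntegral.integral_sub (roundR_intble x) (roundR_intble y),
    roundR_integral, roundR_integral]

private lemma abs_case (x y : ℝ) (hf : ⌊x⌋ = ⌊y⌋) (hle : Int.fract y ≤ Int.fract x) :
    (∫ r in (0:ℝ)..1, |roundR x r - roundR y r|) = |x - y| := by
  have hxy : y ≤ x := by
    have hx := Int.floor_add_fract x
    have hy := Int.floor_add_fract y
    rw [hf] at hx
    linarith
  have hpt : ∀ r, |roundR x r - roundR y r| = roundR x r - roundR y r := by
    intro r
    rw [abs_of_nonneg]
    rw [roundR_eq, roundR_eq, hf]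
    have : stepF (Int.fract y) r ≤ stepF (Int.fract x) r := by
      unfold stepF
      split <;> split <;> simp_all <;> linarith
    linarith
  have : (∫ r in (0:ℝ)..1, |roundR x r - roundR y r|)
      = ∫ r in (0:ℝ)..1, (roundR x r - roundR y r) := by
    apply intervalIntegral.integral_congr
    intro r _; exact hpt r
  rw [this, roundR_sub_integral, abs_of_nonneg (by linarith)]

/-- For `r` uniform on `[0,1]`: `E_r[x]_r = x`; `E_r|[x]_r − [y]_r| ≥ |x − y|`,
with equality when `⌊x⌋ = ⌊y⌋`; and `E_r([x]_r − [y]_r) = x − y`. -/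
theorem randomized_rounding_properties (x y : ℝ) (hx : 0 ≤ x) (hy : 0 ≤ y) :
    (∫ r in (0:ℝ)..1, roundR x r) = x ∧
    |x - y| ≤ ∫ r in (0:ℝ)..1, |roundR x r - roundR y r| ∧
    (⌊x⌋ = ⌊y⌋ → (∫ r in (0:ℝ)..1, |roundR x r - roundR y r|) = |x - y|) ∧
    (∫ r in (0:ℝ)..1, (roundR x r - roundR y r)) = x - y := by
  refine ⟨roundR_integral x, ?_, ?_, roundR_sub_integral x y⟩
  · calc |x - y| = |∫ r in (0:ℝ)..1, (roundR x r - roundR y r)| := by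
          rw [roundR_sub_integral]
      _ ≤ ∫ r in (0:ℝ)..1, |roundR x r - roundR y r| :=
          intervalIntegral.abs_integral_le_integral_abs (by norm_num)
  · intro hf
    rcases le_total (Int.fract y) (Int.fract x) with h | h
    · exact abs_case x y hf h
    · have : (∫ r in (0:ℝ)..1, |roundR x r - roundR y r|)
          = ∫ r in (0:ℝ)..1, |roundR y r - roundR x r| := by
        apply intervalIntegral.integral_congr
        intro r _; exact abs_sub_comm _ _
      rw [this, abs_case y x hf.symm h, abs_sub_comm]
end
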